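/- Let (g,[·,·],φ) be a regular Hom-Lie algebra. Then ad⋆ : g → gl(g*) defined by ad⋆_x ξ = ad*_{φ(x)}((φ⁻²)*(ξ)), i.e. ⟨ad⋆_x ξ, y⟩ = −⟨ξ, [φ⁻¹(x), φ⁻²(y)]⟩, is a representation of g on g* with respect to (φ⁻¹)*: ad⋆ satisfies ad⋆_{φ(x)}∘(φ⁻¹)* = (φ⁻¹)*∘ad⋆_x and ad⋆_{[x,y]}∘(φ⁻¹)* = ad⋆_{φ(x)}∘ad⋆_y − ad⋆_{φ(y)}∘ad⋆_x. -/

import Mathlib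

/-!
Evaluating both sides at `z ∈ g`, the first identity says only that `φ⁻¹` preserves the bracket.
The second becomes the Hom-Jacobi identity in Leibniz form,
`[[a, b], φ c] = [φ a, [b, c]] - [φ b, [a, c]]`, at `a = φ⁻²x`, `b = φ⁻²y`, `c = φ⁻⁴z`.
-/

open LinearMap Module

/-- A (regular, i.e. multiplicative with invertible structure map) Hom-Lie algebra. -/
structure HomLieAlgebra (K g : Type*) [Field K] [AddCommGroup g] [Module K g] where
  bracket : g →ₗ[K] g →ₗ[K] g
  phi : g ≃ₗ[K] g
  skew : ∀ x y, bracket x y = - bracket y x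
  phi_bracket : ∀ x y, phi (bracket x y) = bracket (phi x) (phi y)
  jacobi : ∀ x y z,
    bracket (phi x) (bracket y z) + bracket (phi y) (bracket z x)
      + bracket (phi z) (bracket x y) = 0

variable {K g V : Type*} [Field K] [AddCommGroup g] [Module K g]
  [AddCommGroup V] [Module K V]

/-- `ρ` is a representation of the Hom-Lie algebra `L` on `V` with respect to `β`. -/
def HomLieAlgebra.IsRep (L : HomLieAlgebra K g) (β : V ≃ₗ[K] V)
    (ρ : g →ₗ[K] V →ₗ[K] V) : Prop :=
  (∀ x u, ρ (L.phi x) (β u) = β (ρ x u)) ∧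
  (∀ x y u, ρ (L.bracket x y) (β u) = ρ (L.phi x) (ρ y u) - ρ (L.phi y) (ρ x u))

/-- The coadjoint representation: `⟨ad⋆_x ξ, y⟩ = −⟨ξ, [φ⁻¹(x), φ⁻²(y)]⟩`. -/
def coadRep (L : HomLieAlgebra K g) (x : g) (ξ : Dual K g) : Dual K g :=
  - (ξ ∘ₗ L.bracket (L.phi.symm x) ∘ₗ L.phi.symm.toLinearMap ∘ₗ L.phi.symm.toLinearMap)

namespace HomLieAlgebra

variable (L : HomLieAlgebra K g)

theorem phi_symm_bracket (x y : g) :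
    L.phi.symm (L.bracket x y) = L.bracket (L.phi.symm x) (L.phi.symm y) := by
  rw [L.phi.symm_apply_eq, L.phi_bracket, L.phi.apply_symm_apply, L.phi.apply_symm_apply]

theorem bracket_bracket_phi (a b c : g) :
    L.bracket (L.bracket a b) (L.phi c)
      = L.bracket (L.phi a) (L.bracket b c) - L.bracket (L.phi b) (L.bracket a c) := by
  have h := L.jacobi a b c
  rw [L.skew c a, map_neg, L.skew (L.phi c)] at h
  rw [← sub_eq_zero, ← neg_eq_zero, ← h]
  abel

end HomLieAlgebra

@[simp]
theorem coadRep_apply (L : HomLieAlgebra K g) (x : g) (ξ : Dual K g) (z : g) :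
    coadRep L x ξ z = - ξ (L.bracket (L.phi.symm x) (L.phi.symm (L.phi.symm z))) :=
  rfl

theorem coadRep_isRep (L : HomLieAlgebra K g) :
    (∀ (x : g) (ξ : Dual K g),
      coadRep L (L.phi x) (ξ ∘ₗ L.phi.symm.toLinearMap)
        = (coadRep L x ξ) ∘ₗ L.phi.symm.toLinearMap) ∧
    (∀ (x y : g) (ξ : Dual K g),
      coadRep L (L.bracket x y) (ξ ∘ₗ L.phi.symm.toLinearMap)
        = coadRep L (L.phi x) (coadRep L y ξ)
          - coadRep L (L.phi y) (coadRep L x ξ)) := by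
  set ψ := L.phi.symm
  refine ⟨fun x ξ ↦ ?_, fun x y ξ ↦ ?_⟩
  · ext z
    simp [ψ, L.phi_symm_bracket]
  · ext z
    have h := L.bracket_bracket_phi (ψ (ψ x)) (ψ (ψ y)) (ψ (ψ (ψ (ψ z))))
    simp only [ψ, LinearEquiv.apply_symm_apply] at h
    simp [ψ, L.phi_symm_bracket, h]
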